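/- Let K be a local field and n a positive integer with char(K) ∤ n. Let g(t) = ∏_{j=1}^{r} g_j(P_j(t), Q_j(t)), where each g_j is a function K^*/(K^*)^n × K^*/(K^*)^n → ℂ and P_j, Q_j ∈ K[t] are nonzero polynomials (so g is defined at the t for which all P_j(t) and Q_j(t) are nonzero, i.e., outside a finite set). Then for every t₀ ∈ ℙ¹(K) there is a punctured neighbourhood U_{t₀} of t₀ such that, for t ∈ U_{t₀}, the value of g(t) depends only on (t − t₀) mod (K^*)^n (with 1/t in place of t − t₀ when t₀ = ∞). -/

import Mathlib

/-!
Since `char K ∤ n`, the valuation `ν` of `n` is finite, and Newton's method for `X ^ n - u`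
started at `1` converges as soon as `v (u - 1) > 2ν`: if `D = v (y ^ n - u) > 2ν`, one step
moves `y` by `D - ν` and leaves a defect of at least `2 (D - ν) > D`. So elements close to `1`
are `n`-th powers. Writing a nonzero `P` as `(X - t₀) ^ e * q` with `q t₀ ≠ 0`, continuity
makes `q t / q t₀` close to `1` near `t₀`, so near `t₀` the class of `P t` modulo `n`-th powers
is determined by that of `t - t₀`. At `∞` the same holds for the reversed polynomial at `1 / t`,
because `P t = t ^ deg P * P.reverse (1 / t)`.
-/

/-- A (nonarchimedean) local field structure on a field `K`: a discrete valuation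
`v : K → ℤ ∪ {⊤}` (with `v 0 = ⊤`), normalized so that `v (K^*) = ℤ`, with respect to
which `K` is complete, and whose residue field is finite. -/
structure IsLocalField {K : Type*} [Field K] (v : K → WithTop ℤ) : Prop where
  map_zero : v 0 = ⊤
  ne_top : ∀ x : K, x ≠ 0 → v x ≠ ⊤
  map_mul : ∀ x y : K, v (x * y) = v x + v y
  min_le_add : ∀ x y : K, min (v x) (v y) ≤ v (x + y)
  exists_eq : ∀ k : ℤ, ∃ x : K, v x = (k : WithTop ℤ)
  complete : ∀ a : ℕ → K,
      (∀ k : ℤ, ∃ N : ℕ, ∀ m m' : ℕ, N ≤ m → N ≤ m' → (k : WithTop ℤ) ≤ v (a m - a m')) →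
      ∃ L : K, ∀ k : ℤ, ∃ N : ℕ, ∀ m : ℕ, N ≤ m → (k : WithTop ℤ) ≤ v (a m - L)
  finite_residue : ∃ T : Finset K, ∀ x : K, 0 ≤ v x → ∃ t ∈ T, (1 : WithTop ℤ) ≤ v (x - t)

open Polynomial Filter

section EqUpToPow

variable {G : Type*} [CommGroupWithZero G]

/-- For nonzero `a` and `b`, the classes of `a` and `b` in `Gˣ / (Gˣ) ^ n` agree. -/
def EqUpToPow (n : ℕ) (a b : G) : Prop := ∃ s : G, s ≠ 0 ∧ a = s ^ n * b

namespace EqUpToPow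

variable {n : ℕ} {a b c d : G}

theorem refl (a : G) : EqUpToPow n a a := ⟨1, one_ne_zero, by rw [one_pow, one_mul]⟩

theorem symm : EqUpToPow n a b → EqUpToPow n b a
  | ⟨s, hs, h⟩ =>
    ⟨s⁻¹, inv_ne_zero hs, by rw [h, inv_pow, inv_mul_cancel_left₀ (pow_ne_zero _ hs)]⟩

theorem trans : EqUpToPow n a b → EqUpToPow n b c → EqUpToPow n a c
  | ⟨s, hs, h⟩, ⟨t, ht, h'⟩ =>
    ⟨s * t, mul_ne_zero hs ht, by rw [h, h', mul_pow, mul_assoc]⟩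

theorem mul : EqUpToPow n a b → EqUpToPow n c d → EqUpToPow n (a * c) (b * d)
  | ⟨s, hs, h⟩, ⟨t, ht, h'⟩ =>
    ⟨s * t, mul_ne_zero hs ht, by rw [h, h', mul_pow, mul_mul_mul_comm]⟩

theorem pow (m : ℕ) : EqUpToPow n a b → EqUpToPow n (a ^ m) (b ^ m)
  | ⟨s, hs, h⟩ =>
    ⟨s ^ m, pow_ne_zero _ hs, by rw [h, mul_pow, ← pow_mul, ← pow_mul, mul_comm n m]⟩

theorem inv : EqUpToPow n a b → EqUpToPow n a⁻¹ b⁻¹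
  | ⟨s, hs, h⟩ => ⟨s⁻¹, inv_ne_zero hs, by rw [h, mul_inv, inv_pow]⟩

end EqUpToPow

end EqUpToPow

theorem Polynomial.newtonMap_X_pow_sub_C {K : Type*} [Field K] (n : ℕ) (u y : K) :
    (X ^ n - C u).newtonMap y = y - (y ^ n - u) / (n * y ^ (n - 1)) := by
  simp [newtonMap_apply, Ring.inverse_eq_inv', derivative_X_pow, div_eq_inv_mul, mul_comm]

namespace AddValuation

section CommRing

variable {R Γ : Type*} [CommRing R] [LinearOrderedAddCommMonoidWithTop Γ] (w : AddValuation R Γ)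

theorem map_natCast_nonneg (m : ℕ) : 0 ≤ w m := by
  induction m with
  | zero => simp
  | succ m ih => exact_mod_cast w.map_le_add ih (w.map_one).ge

theorem map_eq_zero_of_pos_map_sub_one {z : R} (h : 0 < w (z - 1)) : w z = 0 :=
  (w.map_eq_of_lt_sub (by rwa [w.map_one])).trans w.map_one

theorem map_pow_nonneg {x : R} (hx : 0 ≤ w x) (m : ℕ) : 0 ≤ w (x ^ m) := by
  rw [w.map_pow]
  exact nsmul_nonneg hx m

theorem map_sub_le_map_pow_sub_pow {x y : R} (hx : 0 ≤ w x) (hy : 0 ≤ w y) (m : ℕ) :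
    w (x - y) ≤ w (x ^ m - y ^ m) := by
  rw [← geom_sum₂_mul, w.map_mul]
  refine le_add_of_nonneg_left (w.map_le_sum fun i _ => ?_)
  rw [w.map_mul]
  exact add_nonneg (w.map_pow_nonneg hx i) (w.map_pow_nonneg hy _)

theorem map_add_map_le_map_add_pow_sub {y δ : R} (hy : 0 ≤ w y) (hδ : 0 ≤ w δ) (m : ℕ) :
    w δ + w δ ≤ w ((y + δ) ^ m - y ^ m - m * y ^ (m - 1) * δ) := by
  have hyδ : 0 ≤ w (y + δ) := w.map_le_add hy hδ
  have key : (y + δ) ^ m - y ^ m - m * y ^ (m - 1) * δ =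
      (∑ i ∈ Finset.range m, ((y + δ) ^ i - y ^ i) * y ^ (m - 1 - i)) * δ := by
    rw [← geom_sum₂_self, ← geom_sum₂_mul, add_sub_cancel_left, ← sub_mul,
      ← Finset.sum_sub_distrib]
    simp only [sub_mul]
  rw [key, w.map_mul]
  refine add_le_add (w.map_le_sum fun i _ => ?_) le_rfl
  rw [w.map_mul]
  calc w δ = w (y + δ - y) := by rw [add_sub_cancel_left]
    _ ≤ w ((y + δ) ^ i - y ^ i) := w.map_sub_le_map_pow_sub_pow hyδ hy i
    _ ≤ _ := le_add_of_nonneg_right (w.map_pow_nonneg hy _)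

theorem exists_le_map_eval (T : R[X]) :
    ∃ C : Γ, ∀ x : R, 0 ≤ w x → C ≤ w (T.eval x) := by
  refine ⟨(Finset.range (T.natDegree + 1)).inf fun i => w (T.coeff i), fun x hx => ?_⟩
  rw [eval_eq_sum_range]
  refine w.map_le_sum fun i hi => ?_
  rw [w.map_mul]
  exact (Finset.inf_le hi).trans (le_add_of_nonneg_right (w.map_pow_nonneg hx i))

end CommRing

theorem eventually_le_map_eval_sub_eval_zero {R : Type*} [CommRing R]
    (w : AddValuation R (WithTop ℤ)) (T : R[X]) (c : ℤ) :
    ∀ᶠ k : ℤ in atTop, ∀ x : R, (k : WithTop ℤ) ≤ w x →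
      (c : WithTop ℤ) ≤ w (T.eval x - T.eval 0) := by
  obtain ⟨C, hC⟩ := w.exists_le_map_eval T.divX
  refine eventually_atTop.2 ⟨max 0 (c - C.untopD 0), fun k hk x hx => ?_⟩
  have hx0 : 0 ≤ w x := le_trans (by exact_mod_cast (le_max_left _ _).trans hk) hx
  have hcx : ((c - C.untopD 0 : ℤ) : WithTop ℤ) ≤ w x :=
    le_trans (by exact_mod_cast (le_max_right _ _).trans hk) hx
  have hsplit : T.eval x - T.eval 0 = x * T.divX.eval x := by
    have := congrArg (eval x) (X_mul_divX_add T)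
    simp only [eval_add, eval_mul, eval_X, eval_C, ← coeff_zero_eq_eval_zero] at this ⊢
    linear_combination -this
  rw [hsplit, w.map_mul]
  calc (c : WithTop ℤ)
        = ((c - C.untopD 0 : ℤ) : WithTop ℤ) + ((C.untopD 0 : ℤ) : WithTop ℤ) := by
          norm_cast; ring
    _ ≤ w x + w (T.divX.eval x) := add_le_add hcx ((WithTop.coe_untopD_le C 0).trans (hC x hx0))

section Field

variable {K : Type*} [Field K] (w : AddValuation K (WithTop ℤ)) {n : ℕ} {ν : ℤ} {u y : K}

theorem map_newtonMap_X_pow_sub_C_sub_add (hν : w n = ν) (hy : w y = 0) :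
    w ((X ^ n - C u).newtonMap y - y) + ν = w (y ^ n - u) := by
  have hden : w (n * y ^ (n - 1) : K) = ν := by rw [w.map_mul, w.map_pow, hy, hν]; simp
  have hden0 : (n * y ^ (n - 1) : K) ≠ 0 := by
    rw [← w.ne_top_iff, hden]; exact WithTop.coe_ne_top
  rw [newtonMap_X_pow_sub_C, sub_sub_cancel_left, w.map_neg, ← hden, ← w.map_mul,
    div_mul_cancel₀ _ hden0]

theorem map_add_map_le_map_newtonMap_X_pow_sub_C_pow_sub (hn : (n : K) ≠ 0) (hy : 0 ≤ w y)
    (hy0 : y ≠ 0) (hδ : 0 ≤ w ((X ^ n - C u).newtonMap y - y)) :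
    w ((X ^ n - C u).newtonMap y - y) + w ((X ^ n - C u).newtonMap y - y) ≤
      w ((X ^ n - C u).newtonMap y ^ n - u) := by
  have key : (X ^ n - C u).newtonMap y ^ n - u = (y + ((X ^ n - C u).newtonMap y - y)) ^ n - y ^ n
      - n * y ^ (n - 1) * ((X ^ n - C u).newtonMap y - y) := by
    rw [newtonMap_X_pow_sub_C]
    field_simp
    ring
  rw [key]
  exact w.map_add_map_le_map_add_pow_sub hy hδ n

theorem newtonMap_X_pow_sub_C_bounds (hν : w n = ν) {z : K} {m : ℕ}
    (h1 : ((ν + 1 : ℤ) : WithTop ℤ) ≤ w (z - 1))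
    (h2 : ((2 * ν + 1 + m : ℤ) : WithTop ℤ) ≤ w (z ^ n - u)) :
    ((ν + 1 + m : ℤ) : WithTop ℤ) ≤ w ((X ^ n - C u).newtonMap z - z) ∧
      ((ν + 1 : ℤ) : WithTop ℤ) ≤ w ((X ^ n - C u).newtonMap z - 1) ∧
      ((2 * ν + 1 + (m + 1 : ℕ) : ℤ) : WithTop ℤ) ≤
        w ((X ^ n - C u).newtonMap z ^ n - u) := by
  have hn : (n : K) ≠ 0 := by
    rw [← w.ne_top_iff, hν]
    exact WithTop.coe_ne_top
  have hν0 : 0 ≤ ν := by exact_mod_cast hν ▸ w.map_natCast_nonneg n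
  have hz : w z = 0 :=
    w.map_eq_zero_of_pos_map_sub_one (h1.trans_lt' (by exact_mod_cast (by omega)))
  have hz0 : z ≠ 0 := by
    rw [← w.ne_top_iff, hz]
    exact WithTop.zero_ne_top
  have hδ : ((ν + 1 + m : ℤ) : WithTop ℤ) ≤ w ((X ^ n - C u).newtonMap z - z) := by
    rw [← WithTop.add_le_add_iff_right (WithTop.coe_ne_top (a := ν)),
      w.map_newtonMap_X_pow_sub_C_sub_add hν hz]
    exact le_trans (by norm_cast; omega) h2
  refine ⟨hδ, ?_, ?_⟩
  · rw [← sub_add_sub_cancel _ z]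
    exact w.map_le_add (le_trans (by norm_cast; omega) hδ) h1
  · refine le_trans ?_ (w.map_add_map_le_map_newtonMap_X_pow_sub_C_pow_sub hn hz.ge hz0
      (le_trans (by norm_cast; omega) hδ))
    exact le_trans (by norm_cast; omega) (add_le_add hδ hδ)

end Field

end AddValuation

namespace IsLocalField

variable {K : Type*} [Field K]

theorem map_one {v : K → WithTop ℤ} (hK : IsLocalField v) : v 1 = 0 := by
  have h := hK.map_mul 1 1
  rw [mul_one] at h
  lift v 1 to ℤ using hK.ne_top 1 one_ne_zero with a
  norm_cast at h ⊢
  omega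

def addValuation {v : K → WithTop ℤ} (hK : IsLocalField v) : AddValuation K (WithTop ℤ) :=
  AddValuation.of v hK.map_zero hK.map_one hK.min_le_add hK.map_mul

variable {w : AddValuation K (WithTop ℤ)} {n : ℕ}

theorem exists_le_map_sub_of_le_map_succ_sub (hK : IsLocalField w) {y : ℕ → K} {b : ℤ}
    (hy : ∀ m : ℕ, ((b + m : ℤ) : WithTop ℤ) ≤ w (y (m + 1) - y m)) :
    ∃ L : K, ∀ m : ℕ, ((b + m : ℤ) : WithTop ℤ) ≤ w (L - y m) := by
  have cauchy : ∀ m m' : ℕ, m ≤ m' → ((b + m : ℤ) : WithTop ℤ) ≤ w (y m' - y m) := by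
    intro m m' h
    induction m', h using Nat.le_induction with
    | base => simp
    | succ m' h ih =>
      rw [← sub_add_sub_cancel (y (m' + 1)) (y m')]
      exact w.map_le_add ((WithTop.coe_le_coe.2 (by omega)).trans (hy m')) ih
  obtain ⟨L, hL⟩ := hK.complete y fun k => ⟨(k - b).toNat, fun m m' hm hm' => by
    rcases le_total m m' with h | h
    · rw [w.map_sub_swap]
      exact (WithTop.coe_le_coe.2 (by omega)).trans (cauchy m m' h)
    · exact (WithTop.coe_le_coe.2 (by omega)).trans (cauchy m' m h)⟩
  refine ⟨L, fun m => ?_⟩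
  obtain ⟨N, hN⟩ := hL (b + m)
  rw [← sub_add_sub_cancel L (y (max N m))]
  refine w.map_le_add ?_ (cauchy m _ (le_max_right _ _))
  rw [w.map_sub_swap]
  exact hN _ (le_max_left _ _)

theorem eqUpToPow_one_of_le_map_sub_one (hK : IsLocalField w) {ν : ℤ} (hν : w n = ν) {u : K}
    (hu : ((2 * ν + 1 : ℤ) : WithTop ℤ) ≤ w (u - 1)) : EqUpToPow n u 1 := by
  set N : K → K := (X ^ n - C u).newtonMap
  set y : ℕ → K := fun m => N^[m] 1
  have hy_succ : ∀ m, y (m + 1) = N (y m) := fun m => Function.iterate_succ_apply' _ _ _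
  have hν0 : 0 ≤ ν := by exact_mod_cast hν ▸ w.map_natCast_nonneg n
  have inv : ∀ m : ℕ, ((ν + 1 : ℤ) : WithTop ℤ) ≤ w (y m - 1) ∧
      ((2 * ν + 1 + m : ℤ) : WithTop ℤ) ≤ w (y m ^ n - u) := by
    intro m
    induction m with
    | zero => exact ⟨by simp [y], by simpa [y, w.map_sub_swap] using hu⟩
    | succ m ih =>
      rw [hy_succ]
      exact (w.newtonMap_X_pow_sub_C_bounds hν ih.1 ih.2).2
  obtain ⟨L, hL⟩ := hK.exists_le_map_sub_of_le_map_succ_sub (b := ν + 1) (y := y) fun m => by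
    rw [hy_succ]
    exact (w.newtonMap_X_pow_sub_C_bounds hν (inv m).1 (inv m).2).1
  have near_one : ∀ {z : K}, ((ν + 1 : ℤ) : WithTop ℤ) ≤ w (z - 1) → w z = 0 := fun h =>
    w.map_eq_zero_of_pos_map_sub_one (h.trans_lt' (by exact_mod_cast (by omega)))
  have hL1 : w L = 0 := near_one (by simpa [y] using hL 0)
  have hLu : L ^ n - u = 0 := by
    refine w.top_iff.1 (WithTop.eq_top_iff_forall_ge.2 fun k => ?_)
    set m := (k - ν - 1).toNat
    rw [← sub_add_sub_cancel _ (y m ^ n)]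
    refine w.map_le_add ?_ (le_trans (by norm_cast; omega) (inv m).2)
    refine le_trans ?_ (w.map_sub_le_map_pow_sub_pow hL1.ge (near_one (inv m).1).ge n)
    exact le_trans (by norm_cast; omega) (hL m)
  refine ⟨L, ?_, by rw [mul_one, ← sub_eq_zero.1 hLu]⟩
  rw [← w.ne_top_iff, hL1]
  exact WithTop.zero_ne_top

theorem eventually_eqUpToPow_eval (hK : IsLocalField w) (hn : (n : K) ≠ 0) {q : K[X]} {t₀ : K}
    (hq : q.eval t₀ ≠ 0) :
    ∀ᶠ k : ℤ in atTop, ∀ t : K, (k : WithTop ℤ) ≤ w (t - t₀) →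
      EqUpToPow n (q.eval t) (q.eval t₀) := by
  obtain ⟨ν, hν⟩ := WithTop.ne_top_iff_exists.1 (w.ne_top_iff.2 hn)
  set T := C (q.eval t₀)⁻¹ * taylor t₀ q
  have hT : ∀ x, T.eval x = (q.eval t₀)⁻¹ * q.eval (x + t₀) := fun x => by
    simp [T, taylor_eval]
  filter_upwards [w.eventually_le_map_eval_sub_eval_zero T (2 * ν + 1)] with k hk t ht
  have hu : EqUpToPow n (T.eval (t - t₀)) 1 := by
    refine hK.eqUpToPow_one_of_le_map_sub_one hν.symm ?_
    simpa [hT, inv_mul_cancel₀ hq] using hk _ ht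
  have hq_eq : q.eval t = T.eval (t - t₀) * q.eval t₀ := by
    rw [hT, sub_add_cancel, mul_comm, mul_inv_cancel_left₀ hq]
  rw [hq_eq]
  simpa using hu.mul (EqUpToPow.refl (q.eval t₀))

theorem eventually_eqUpToPow_eval_of_eqUpToPow_sub (hK : IsLocalField w) (hn : (n : K) ≠ 0)
    {P : K[X]} (hP : P ≠ 0) (t₀ : K) :
    ∀ᶠ k : ℤ in atTop, ∀ t₁ t₂ : K, (k : WithTop ℤ) ≤ w (t₁ - t₀) →
      (k : WithTop ℤ) ≤ w (t₂ - t₀) → EqUpToPow n (t₁ - t₀) (t₂ - t₀) →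
      EqUpToPow n (P.eval t₁) (P.eval t₂) := by
  obtain ⟨q, hPq, hq⟩ := exists_eq_pow_rootMultiplicity_mul_and_not_dvd P hP t₀
  rw [dvd_iff_isRoot] at hq
  have heval : ∀ t, P.eval t = (t - t₀) ^ rootMultiplicity t₀ P * q.eval t := fun t => by
    conv_lhs => rw [hPq]
    simp
  filter_upwards [hK.eventually_eqUpToPow_eval hn hq] with k hk t₁ t₂ h₁ h₂ h
  rw [heval, heval]
  exact (h.pow _).mul ((hk t₁ h₁).trans (hk t₂ h₂).symm)

theorem eventually_eqUpToPow_eval_of_eqUpToPow_inv (hK : IsLocalField w) (hn : (n : K) ≠ 0)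
    {P : K[X]} (hP : P ≠ 0) :
    ∀ᶠ k : ℤ in atBot, ∀ t₁ t₂ : K, w t₁ ≤ (k : WithTop ℤ) → w t₂ ≤ (k : WithTop ℤ) →
      EqUpToPow n t₁⁻¹ t₂⁻¹ → EqUpToPow n (P.eval t₁) (P.eval t₂) := by
  have hrev : P.reverse.eval 0 ≠ 0 := by
    rwa [← coeff_zero_eq_eval_zero, coeff_zero_reverse, leadingCoeff_ne_zero]
  have heval : ∀ t : K, t ≠ 0 → P.eval t = t ^ P.natDegree * P.reverse.eval t⁻¹ := by
    intro t ht
    have : Invertible t := invertibleOfNonzero ht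
    rw [← eval₂_id, ← eval₂_reverse_mul_pow, invOf_eq_inv, eval₂_id, mul_comm]
  have hinv : ∀ {k : ℤ} {t : K}, w t ≤ (k : WithTop ℤ) →
      t ≠ 0 ∧ ((-k : ℤ) : WithTop ℤ) ≤ w (t⁻¹ - 0) := by
    intro k t ht
    have ht0 : t ≠ 0 := by
      rintro rfl
      simp at ht
    refine ⟨ht0, ?_⟩
    obtain ⟨a, ha⟩ := WithTop.ne_top_iff_exists.1 (w.ne_top_iff.2 ht0)
    rw [sub_zero, w.map_inv, ← ha]
    rw [← ha] at ht
    norm_cast at ht ⊢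
    omega
  filter_upwards [tendsto_neg_atBot_atTop.eventually (hK.eventually_eqUpToPow_eval hn hrev)]
    with k hk t₁ t₂ h₁ h₂ h
  obtain ⟨ht₁, h₁⟩ := hinv h₁
  obtain ⟨ht₂, h₂⟩ := hinv h₂
  rw [heval t₁ ht₁, heval t₂ ht₂]
  have hpow : EqUpToPow n (t₁ ^ P.natDegree) (t₂ ^ P.natDegree) := by
    simpa using h.inv.pow P.natDegree
  exact hpow.mul ((hk _ h₁).trans (hk _ h₂).symm)

end IsLocalField

/-- Let `K` be a local field and `n` a positive integer with `char K ∤ n`.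
Let `g(t) = ∏_{j=1}^r g_j(P_j(t), Q_j(t))`, where each `g_j` is a function
`K^*/(K^*)^n × K^*/(K^*)^n → ℂ` and `P_j, Q_j ∈ K[t]` are nonzero polynomials.  Then for
every `t₀ ∈ ℙ¹(K)` there is a punctured neighbourhood `U_{t₀}` of `t₀` such that, for
`t ∈ U_{t₀}`, the value of `g(t)` depends only on `(t − t₀) mod (K^*)^n`
(with `1/t` in place of `t − t₀` when `t₀ = ∞`). -/
theorem stmt4 {K : Type*} [Field K] (v : K → WithTop ℤ) (hK : IsLocalField v)
    (n : ℕ) (hn : 0 < n) (hchar : ringChar K = 0 ∨ ¬ (ringChar K ∣ n))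
    (r : ℕ) (g : Fin r → K → K → ℂ)
    (hg : ∀ (j : Fin r) (a b s t : K), s ≠ 0 → t ≠ 0 →
      g j (s ^ n * a) (t ^ n * b) = g j a b)
    (P Q : Fin r → Polynomial K) (hP : ∀ j, P j ≠ 0) (hQ : ∀ j, Q j ≠ 0) :
    (∀ t₀ : K, ∃ k : ℤ, ∀ t₁ t₂ : K, t₁ ≠ t₀ → t₂ ≠ t₀ →
        (k : WithTop ℤ) ≤ v (t₁ - t₀) → (k : WithTop ℤ) ≤ v (t₂ - t₀) →
        (∀ j, (P j).eval t₁ ≠ 0 ∧ (Q j).eval t₁ ≠ 0) →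
        (∀ j, (P j).eval t₂ ≠ 0 ∧ (Q j).eval t₂ ≠ 0) →
        (∃ s : K, s ≠ 0 ∧ t₁ - t₀ = s ^ n * (t₂ - t₀)) →
        (∏ j, g j ((P j).eval t₁) ((Q j).eval t₁)) =
          ∏ j, g j ((P j).eval t₂) ((Q j).eval t₂))
    ∧ (∃ k : ℤ, ∀ t₁ t₂ : K, v t₁ ≤ (k : WithTop ℤ) → v t₂ ≤ (k : WithTop ℤ) →
        (∀ j, (P j).eval t₁ ≠ 0 ∧ (Q j).eval t₁ ≠ 0) →
        (∀ j, (P j).eval t₂ ≠ 0 ∧ (Q j).eval t₂ ≠ 0) →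
        (∃ s : K, s ≠ 0 ∧ t₁⁻¹ = s ^ n * t₂⁻¹) →
        (∏ j, g j ((P j).eval t₁) ((Q j).eval t₁)) =
          ∏ j, g j ((P j).eval t₂) ((Q j).eval t₂)) := by
  have hnK : (n : K) ≠ 0 := by
    rw [Ne, ringChar.spec]
    rcases hchar with h | h
    · rw [h, zero_dvd_iff]
      omega
    · exact h
  obtain ⟨w, rfl⟩ : ∃ w : AddValuation K (WithTop ℤ), ⇑w = v := ⟨hK.addValuation, rfl⟩
  have hg_eqUpToPow : ∀ j {a₁ a₂ b₁ b₂ : K}, EqUpToPow n a₁ a₂ → EqUpToPow n b₁ b₂ →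
      g j a₁ b₁ = g j a₂ b₂ := by
    rintro j a₁ a₂ b₁ b₂ ⟨s, hs, rfl⟩ ⟨t, ht, rfl⟩
    exact hg j a₂ b₂ s t hs ht
  refine ⟨fun t₀ => ?_, ?_⟩
  · obtain ⟨k, hk⟩ := (eventually_all.2 fun j =>
      (hK.eventually_eqUpToPow_eval_of_eqUpToPow_sub hnK (hP j) t₀).and
        (hK.eventually_eqUpToPow_eval_of_eqUpToPow_sub hnK (hQ j) t₀)).exists
    exact ⟨k, fun t₁ t₂ _ _ h₁ h₂ _ _ h => Finset.prod_congr rfl fun j _ =>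
      hg_eqUpToPow j ((hk j).1 t₁ t₂ h₁ h₂ h) ((hk j).2 t₁ t₂ h₁ h₂ h)⟩
  · obtain ⟨k, hk⟩ := (eventually_all.2 fun j =>
      (hK.eventually_eqUpToPow_eval_of_eqUpToPow_inv hnK (hP j)).and
        (hK.eventually_eqUpToPow_eval_of_eqUpToPow_inv hnK (hQ j))).exists
    exact ⟨k, fun t₁ t₂ h₁ h₂ _ _ h => Finset.prod_congr rfl fun j _ =>
      hg_eqUpToPow j ((hk j).1 t₁ t₂ h₁ h₂ h) ((hk j).2 t₁ t₂ h₁ h₂ h)⟩
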